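/- For all integers m₁, m₂ ∈ {0} ∪ {2, 3, …} with m₁ ≤ m₂ and m₂ ≥ 2 and all t ≥ 1 (with t ≥ 2 when m₁ = 0), the domination number of the graph F_{m₁,t,m₂} equals 2; that is, F_{m₁,t,m₂} has a dominating set of size 2 but no dominating set of size 1. -/
import Mathlib


/-- `D` is a dominating set of `G`: every vertex not in `D` has a neighbor in `D`. -/
def Dominating {V : Type*} (G : SimpleGraph V) (D : Set V) : Prop :=
  ∀ v, v ∉ D → ∃ d ∈ D, G.Adj d v

/-- The graph `H_m`, the join of `K₂` with the complement of `K_{m-2}`: the first two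
vertices are adjacent to everything, the remaining vertices form an independent set.
(`H₀` is the null graph, `H₂ = K₂`.) -/
def HGraph (m : ℕ) : SimpleGraph (Fin m) :=
  SimpleGraph.fromRel (fun u _ => u.val < 2)

/-- Vertex type of `F_{m₁,t,m₂}`: a copy of `H_{m₁}`, a copy of `H_{m₂}`, the independent
set `B` of `t` vertices, and the two vertices `v₁ = inr (inr 0)` and `v₂ = inr (inr 1)`. -/
abbrev FVert (m₁ t m₂ : ℕ) : Type := (Fin m₁ ⊕ Fin m₂) ⊕ (Fin t ⊕ Fin 2)

/-- The graph `F_{m₁,t,m₂}`: disjoint copies of `H_{m₁}` and `H_{m₂}`, an independent set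
`B` of `t` vertices, and nonadjacent vertices `v₁, v₂`, where `v₁` is joined to `H_{m₁}`,
`v₂` is joined to `H_{m₂}`, and both `v₁` and `v₂` are joined to all of `B`. -/
def FGraph (m₁ t m₂ : ℕ) : SimpleGraph (FVert m₁ t m₂) :=
  SimpleGraph.fromRel (fun u v =>
    match u, v with
    | .inl (.inl a), .inl (.inl _) => a.val < 2   -- inside H_{m₁}
    | .inl (.inr a), .inl (.inr _) => a.val < 2   -- inside H_{m₂}
    | .inr (.inr i), .inl (.inl _) => i = 0       -- v₁ to H_{m₁}
    | .inr (.inr i), .inl (.inr _) => i = 1       -- v₂ to H_{m₂}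
    | .inr (.inr _), .inr (.inl _) => True        -- v₁, v₂ to B
    | _, _ => False)

theorem stmt17 (m₁ t m₂ : ℕ) (hm₁ : m₁ = 0 ∨ 2 ≤ m₁) (h₁₂ : m₁ ≤ m₂)
    (hm₂ : 2 ≤ m₂) (ht : 1 ≤ t) (ht₀ : m₁ = 0 → 2 ≤ t) :
    (∃ D : Set (FVert m₁ t m₂), D.ncard = 2 ∧ Dominating (FGraph m₁ t m₂) D) ∧
      ∀ D : Set (FVert m₁ t m₂), D.ncard = 1 → ¬ Dominating (FGraph m₁ t m₂) D := by
  constructor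
  · refine ⟨{.inr (.inr 0), .inr (.inr 1)}, ?_, ?_⟩
    · exact Set.ncard_pair (by simp)
    · intro v hv
      rcases v with (a | a) | (b | i)
      · exact ⟨.inr (.inr 0), by simp, by simp [FGraph, SimpleGraph.fromRel_adj]⟩
      · exact ⟨.inr (.inr 1), by simp, by simp [FGraph, SimpleGraph.fromRel_adj]⟩
      · exact ⟨.inr (.inr 0), by simp, by simp [FGraph, SimpleGraph.fromRel_adj]⟩
      · exfalso; apply hv; fin_cases i <;> simp
  · intro D hD hdom
    obtain ⟨d, rfl⟩ := Set.ncard_eq_one.mp hD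
    have h : ∀ v, v ≠ d → (FGraph m₁ t m₂).Adj d v := by
      intro v hv
      obtain ⟨x, hx, ha⟩ := hdom v (by simpa using hv)
      simp only [Set.mem_singleton_iff] at hx
      subst hx; exact ha
    rcases d with (a | a) | (b | i)
    · have := h (.inl (.inr ⟨0, by omega⟩)) (by simp)
      simp [FGraph, SimpleGraph.fromRel_adj] at this
    · have := h (.inr (.inr 0)) (by simp)
      simp [FGraph, SimpleGraph.fromRel_adj] at this
    · have := h (.inl (.inr ⟨0, by omega⟩)) (by simp)
      simp [FGraph, SimpleGraph.fromRel_adj] at this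
    · fin_cases i
      · have := h (.inr (.inr 1)) (by simp)
        simp [FGraph, SimpleGraph.fromRel_adj] at this
      · have := h (.inr (.inr 0)) (by simp)
        simp [FGraph, SimpleGraph.fromRel_adj] at this
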